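/- The conditions δω = 0 and N = 0 hold simultaneously (the structure (J,⟨·,·⟩) is balanced, class W₃) if and only if Tr D = 0, v₀ = 0, w₀ = 0 and D∘J' = J'∘D (i.e. D ∈ gl(n−1,ℂ)). -/
import Mathlib


open scoped BigOperators
open Matrix

noncomputable section

/-- The underlying `2n`-dimensional real vector space `ℝ^{2n}`, whose standard basis
plays the role of the orthonormal basis `e₀, e₁, …, e_{2n-1}`. -/
abbrev G (n : ℕ) := Fin (2*n) → ℝ

/-- The inner product `⟨·,·⟩` making the standard basis orthonormal. -/
def inn {n : ℕ} (x y : G n) : ℝ := ∑ i, x i * y i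

/-- The standard basis vector `e k` (indexed by a natural number `k`). -/
def E (n : ℕ) (k : ℕ) : G n := fun i => if (i : ℕ) = k then 1 else 0

/-- Membership in `a = span{e₂, …, e_{2n-1}}`. -/
def inA {n : ℕ} (x : G n) : Prop := ∀ i : Fin (2*n), (i : ℕ) < 2 → x i = 0

/-- The orthogonal almost complex structure `J e_{2i} = e_{2i+1}`, `J e_{2i+1} = -e_{2i}`. -/
def Jm (n : ℕ) : Matrix (Fin (2*n)) (Fin (2*n)) ℝ :=
  Matrix.of fun k l =>
    if (k : ℕ) = (l : ℕ) + 1 ∧ Even (l : ℕ) then (1 : ℝ)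
    else if (l : ℕ) = (k : ℕ) + 1 ∧ Even (k : ℕ) then -1 else 0

/-- `D` is (the extension by zero of) an endomorphism of `a`: it vanishes on
`span{e₀, e₁}` and takes values orthogonal to `span{e₀, e₁}`. -/
def DinA {n : ℕ} (D : Matrix (Fin (2*n)) (Fin (2*n)) ℝ) : Prop :=
  ∀ k l : Fin (2*n), ((k : ℕ) < 2 ∨ (l : ℕ) < 2) → D k l = 0

/-- The matrix of `L` determined by the data `μ, v₀, w₀, D`, i.e.
`L e₀ = 0`, `L e₁ = μ e₁ + v₀` and `L x = ⟨w₀, x⟩ e₁ + D x` for `x ∈ a`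
(for `v₀, w₀ ∈ a` and `D` an endomorphism of `a`). -/
def Lm {n : ℕ} (μ : ℝ) (v₀ w₀ : G n) (D : Matrix (Fin (2*n)) (Fin (2*n)) ℝ) :
    Matrix (Fin (2*n)) (Fin (2*n)) ℝ :=
  Matrix.of fun k l =>
    (if (k : ℕ) = 1 ∧ (l : ℕ) = 1 then μ else 0)
      + (if (l : ℕ) = 1 then v₀ k else 0)
      + (if (k : ℕ) = 1 then w₀ l else 0)
      + D k l

/-- The Lie bracket of the almost abelian Lie algebra `g = ℝ e₀ ⋉_L u`:
`[e₀, u] = L u` for `u ∈ u = span{e₁, …, e_{2n-1}}` and `[u, v] = 0` for `u, v ∈ u`. -/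
def br {n : ℕ} (L : Matrix (Fin (2*n)) (Fin (2*n)) ℝ) (x y : G n) : G n :=
  inn x (E n 0) • L.mulVec y - inn y (E n 0) • L.mulVec x

/-- `nabla` is the Levi-Civita connection of `⟨·,·⟩`, i.e. it satisfies the Koszul
formula `2⟨∇_x y, z⟩ = ⟨[x,y],z⟩ − ⟨[y,z],x⟩ + ⟨[z,x],y⟩`. -/
def Koszul {n : ℕ} (L : Matrix (Fin (2*n)) (Fin (2*n)) ℝ) (nabla : G n → G n → G n) : Prop :=
  ∀ x y z : G n, 2 * inn (nabla x y) z
    = inn (br L x y) z - inn (br L y z) x + inn (br L z x) y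

/-- `(∇_y J)(x) = ∇_y (Jx) − J ∇_y x`. -/
def covJ {n : ℕ} (nabla : G n → G n → G n) (y x : G n) : G n :=
  nabla y ((Jm n).mulVec x) - (Jm n).mulVec (nabla y x)

/-- The rough Laplacian
`(∇*∇J)(x) = Σ_i ((∇_{e_i}(∇_{e_i}J))(x) − (∇_{∇_{e_i}e_i} J)(x))`. -/
def roughLap {n : ℕ} (nabla : G n → G n → G n) (x : G n) : G n :=
  ∑ i : Fin (2*n),
    (nabla (E n i.val) (covJ nabla (E n i.val) x)
      - covJ nabla (E n i.val) (nabla (E n i.val) x)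
      - covJ nabla (nabla (E n i.val) (E n i.val)) x)

/-- `J` is harmonic: `J ∘ (∇*∇J) = (∇*∇J) ∘ J`. -/
def Harmonic {n : ℕ} (nabla : G n → G n → G n) : Prop :=
  ∀ x : G n, (Jm n).mulVec (roughLap nabla x) = roughLap nabla ((Jm n).mulVec x)

/-- Symmetric part of a matrix. -/
def symPart {n : ℕ} (M : Matrix (Fin (2*n)) (Fin (2*n)) ℝ) :
    Matrix (Fin (2*n)) (Fin (2*n)) ℝ := (1/2 : ℝ) • (M + Mᵀ)

/-- Skew-symmetric part of a matrix. -/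
def skewPart {n : ℕ} (M : Matrix (Fin (2*n)) (Fin (2*n)) ℝ) :
    Matrix (Fin (2*n)) (Fin (2*n)) ℝ := (1/2 : ℝ) • (M - Mᵀ)

/-- `γ = (v₀ + w₀)/2`. -/
def gam {n : ℕ} (v₀ w₀ : G n) : G n := (1/2 : ℝ) • (v₀ + w₀)

/-- `ρ = (v₀ − w₀)/2`. -/
def rho {n : ℕ} (v₀ w₀ : G n) : G n := (1/2 : ℝ) • (v₀ - w₀)

/-- The fundamental 2-form `ω(x,y) = ⟨Jx, y⟩`. -/
def om {n : ℕ} (x y : G n) : ℝ := inn ((Jm n).mulVec x) y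

/-- `(∇_x ω)(y,z) = −ω(∇_x y, z) − ω(y, ∇_x z)`. -/
def nablaOm {n : ℕ} (nabla : G n → G n → G n) (x y z : G n) : ℝ :=
  - om (nabla x y) z - om y (nabla x z)

/-- `dω(x,y,z) = −ω([x,y],z) − ω([y,z],x) − ω([z,x],y)`. -/
def dOm {n : ℕ} (L : Matrix (Fin (2*n)) (Fin (2*n)) ℝ) (x y z : G n) : ℝ :=
  - om (br L x y) z - om (br L y z) x - om (br L z x) y

/-- The codifferential `δω(x) = −Σ_i (∇_{e_i}ω)(e_i, x)`. -/
def deltaOm {n : ℕ} (nabla : G n → G n → G n) (x : G n) : ℝ :=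
  - ∑ i : Fin (2*n), nablaOm nabla (E n i.val) (E n i.val) x

/-- The Nijenhuis tensor `N(x,y) = [x,y] + J([Jx,y] + [x,Jy]) − [Jx,Jy]`. -/
def Nij {n : ℕ} (L : Matrix (Fin (2*n)) (Fin (2*n)) ℝ) (x y : G n) : G n :=
  br L x y
    + (Jm n).mulVec (br L ((Jm n).mulVec x) y + br L x ((Jm n).mulVec y))
    - br L ((Jm n).mulVec x) ((Jm n).mulVec y)

/-- `T⁻(x,y,z) = (∇_x ω)(y,z) − (∇_{Jx} ω)(Jy,z)`. -/
def Tminus {n : ℕ} (nabla : G n → G n → G n) (x y z : G n) : ℝ :=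
  nablaOm nabla x y z - nablaOm nabla ((Jm n).mulVec x) ((Jm n).mulVec y) z

/-- `T⁺(x,y,z) = (∇_x ω)(y,z) + (∇_{Jx} ω)(Jy,z)`. -/
def Tplus {n : ℕ} (nabla : G n → G n → G n) (x y z : G n) : ℝ :=
  nablaOm nabla x y z + nablaOm nabla ((Jm n).mulVec x) ((Jm n).mulVec y) z

/-- `U(x,y,z) = ⟨x,y⟩δω(z) − ⟨x,z⟩δω(y) − ⟨x,Jy⟩δω(Jz) + ⟨x,Jz⟩δω(Jy)`. -/
def Uten {n : ℕ} (nabla : G n → G n → G n) (x y z : G n) : ℝ :=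
  inn x y * deltaOm nabla z - inn x z * deltaOm nabla y
    - inn x ((Jm n).mulVec y) * deltaOm nabla ((Jm n).mulVec z)
    + inn x ((Jm n).mulVec z) * deltaOm nabla ((Jm n).mulVec y)

/-- The Lee form `θ(x) = −(1/(n−1)) δω(Jx)`. -/
def Lee {n : ℕ} (nabla : G n → G n → G n) (x : G n) : ℝ :=
  -(1/((n : ℝ) - 1)) * deltaOm nabla ((Jm n).mulVec x)

/-- The identity of `a`, extended by zero to `g`. -/
def Ia (n : ℕ) : Matrix (Fin (2*n)) (Fin (2*n)) ℝ :=
  Matrix.of fun k l => if k = l ∧ 2 ≤ (k : ℕ) then (1 : ℝ) else 0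

section Helpers
variable {n : ℕ}

lemma inn_comm (x y : G n) : inn x y = inn y x := by
  simp [inn, mul_comm]

lemma innE {k : ℕ} (hk : k < 2*n) (v : G n) : inn v (E n k) = v ⟨k, hk⟩ := by
  simp only [inn, E]
  rw [Finset.sum_congr rfl (fun i _ => ?_), Finset.sum_ite_eq' Finset.univ (⟨k,hk⟩ : Fin (2*n)) v]
  · simp
  · by_cases h : i = (⟨k,hk⟩ : Fin (2*n))
    · simp [h]
    · have : (i:ℕ) ≠ k := fun hc => h (Fin.ext hc)
      simp [h, this]

lemma innE' {k : ℕ} (hk : k < 2*n) (v : G n) : inn (E n k) v = v ⟨k, hk⟩ := by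
  rw [inn_comm]; exact innE hk v

lemma inn_self_eq_zero {v : G n} (h : inn v v = 0) : v = 0 := by
  funext i
  have h2 : ∑ j, v j * v j = 0 := h
  have := (Finset.sum_eq_zero_iff_of_nonneg (fun j _ => mul_self_nonneg (v j))).mp h2 i (Finset.mem_univ i)
  have := mul_self_eq_zero.mp this
  simpa using this

lemma mulVec_apply (M : Matrix (Fin (2*n)) (Fin (2*n)) ℝ) (v : G n) (k : Fin (2*n)) :
    M.mulVec v k = ∑ l, M k l * v l := by simp [Matrix.mulVec, dotProduct]

lemma mulVecE (M : Matrix (Fin (2*n)) (Fin (2*n)) ℝ) {k : ℕ} (hk : k < 2*n) (i : Fin (2*n)) :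
    M.mulVec (E n k) i = M i ⟨k, hk⟩ := by
  rw [mulVec_apply]
  rw [Finset.sum_congr rfl (fun l _ => ?_), Finset.sum_ite_eq' Finset.univ (⟨k,hk⟩ : Fin (2*n)) (M i)]
  · simp
  · by_cases h : l = (⟨k,hk⟩ : Fin (2*n))
    · simp [E, h]
    · have : (l:ℕ) ≠ k := fun hc => h (Fin.ext hc)
      simp [E, h, this]

lemma inn_mulVec_swap (M : Matrix (Fin (2*n)) (Fin (2*n)) ℝ) (u v : G n) :
    inn (M.mulVec u) v = ∑ k, ∑ l, M k l * u l * v k := by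
  simp only [inn, mulVec_apply, Finset.sum_mul]

end Helpers
section JL
variable {n : ℕ}

lemma Jm_row_even {k : ℕ} (hk : k < 2*n) (he : k % 2 = 0) (l : Fin (2*n)) :
    Jm n ⟨k,hk⟩ l = if (l:ℕ) = k+1 then -1 else 0 := by
  simp only [Jm, Matrix.of_apply]
  have hEk : Even k := Nat.even_iff.mpr he
  by_cases h1 : k = (l:ℕ) + 1 ∧ Even (l:ℕ)
  · exfalso; rcases h1 with ⟨h1a, h1b⟩; rw [Nat.even_iff] at h1b; omega
  · rw [if_neg h1]
    by_cases h2 : (l:ℕ) = k + 1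
    · rw [if_pos ⟨h2, hEk⟩, if_pos h2]
    · rw [if_neg (fun hc => h2 hc.1), if_neg h2]

lemma Jm_row_odd {k : ℕ} (hk : k < 2*n) (he : k % 2 = 1) (l : Fin (2*n)) :
    Jm n ⟨k,hk⟩ l = if (l:ℕ) + 1 = k then 1 else 0 := by
  simp only [Jm, Matrix.of_apply]
  by_cases h2 : (l:ℕ) + 1 = k
  · have hEl : Even (l:ℕ) := by rw [Nat.even_iff]; omega
    rw [if_pos ⟨h2.symm, hEl⟩, if_pos h2]
  · have hA : ¬(k = (l:ℕ) + 1 ∧ Even (l:ℕ)) := fun hc => h2 hc.1.symm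
    have hB : ¬((l:ℕ) = k + 1 ∧ Even k) := fun hc => by
      rcases hc with ⟨_, hek⟩; rw [Nat.even_iff] at hek; omega
    rw [if_neg hA, if_neg hB, if_neg h2]

lemma J_apply_even {k : ℕ} (hk1 : k + 1 < 2*n) (he : k % 2 = 0) (v : G n) :
    (Jm n).mulVec v ⟨k, by omega⟩ = -v ⟨k+1, hk1⟩ := by
  rw [mulVec_apply]
  rw [Finset.sum_congr rfl (fun l _ => ?_),
    Finset.sum_ite_eq' Finset.univ (⟨k+1,hk1⟩ : Fin (2*n)) (fun l => -v l)]
  · simp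
  · rw [Jm_row_even (by omega) he]
    by_cases h : (l:ℕ) = k+1
    · rw [if_pos h, if_pos (Fin.ext h)]; ring
    · rw [if_neg h, if_neg (fun hc => h (by rw [hc]))]; ring

lemma J_apply_odd {k : ℕ} (hk : k < 2*n) (he : k % 2 = 1) (v : G n) :
    (Jm n).mulVec v ⟨k, hk⟩ = v ⟨k-1, by omega⟩ := by
  rw [mulVec_apply]
  rw [Finset.sum_congr rfl (fun l _ => ?_),
    Finset.sum_ite_eq' Finset.univ (⟨k-1, by omega⟩ : Fin (2*n)) v]
  · simp
  · rw [Jm_row_odd hk he]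
    by_cases h : (l:ℕ) + 1 = k
    · rw [if_pos h, if_pos (Fin.ext (show (l:ℕ) = k - 1 by omega))]; ring
    · rw [if_neg h, if_neg ?_]
      · ring
      · intro hc
        have hv : (l:ℕ) = k - 1 := congrArg Fin.val hc
        exact h (by omega)

lemma JJ (v : G n) : (Jm n).mulVec ((Jm n).mulVec v) = -v := by
  funext i
  rcases Nat.even_or_odd (i:ℕ) with he | ho
  · rw [Nat.even_iff] at he
    have hi1 : (i:ℕ)+1 < 2*n := by have := i.isLt; omega
    have h1 : ((Jm n).mulVec ((Jm n).mulVec v)) ⟨(i:ℕ), by omega⟩ = -((Jm n).mulVec v) ⟨(i:ℕ)+1, hi1⟩ :=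
      J_apply_even hi1 he _
    have h2 : ((Jm n).mulVec v) ⟨(i:ℕ)+1, hi1⟩ = v ⟨(i:ℕ)+1-1, by omega⟩ :=
      J_apply_odd hi1 (by omega) v
    have hi : (⟨(i:ℕ), by omega⟩ : Fin (2*n)) = i := Fin.ext rfl
    have hi' : (⟨(i:ℕ)+1-1, by omega⟩ : Fin (2*n)) = i := Fin.ext (show (i:ℕ)+1-1 = (i:ℕ) by omega)
    rw [hi] at h1; rw [hi'] at h2
    rw [h1, h2]; rfl
  · rw [Nat.odd_iff] at ho
    have h1 : ((Jm n).mulVec ((Jm n).mulVec v)) ⟨(i:ℕ), i.isLt⟩ = ((Jm n).mulVec v) ⟨(i:ℕ)-1, by omega⟩ :=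
      J_apply_odd i.isLt ho _
    have h2 : ((Jm n).mulVec v) ⟨(i:ℕ)-1, by omega⟩ = -v ⟨(i:ℕ)-1+1, by omega⟩ :=
      J_apply_even (by omega) (by omega) v
    have hi : (⟨(i:ℕ), i.isLt⟩ : Fin (2*n)) = i := Fin.ext rfl
    have hi' : (⟨(i:ℕ)-1+1, by omega⟩ : Fin (2*n)) = i := Fin.ext (show (i:ℕ)-1+1 = (i:ℕ) by omega)
    rw [hi] at h1; rw [hi'] at h2
    rw [h1, h2]; rfl

lemma J_inA {v : G n} (hv : inA v) : inA ((Jm n).mulVec v) := by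
  intro i hi
  interval_cases h : (i : ℕ)
  · have : ((Jm n).mulVec v) ⟨0, by omega⟩ = -v ⟨1, by omega⟩ := J_apply_even (by omega) (by omega) v
    rw [show i = (⟨0, by omega⟩ : Fin (2*n)) from Fin.ext h] at *
    rw [this, hv ⟨1, by omega⟩ (by simp)]; ring
  · have : ((Jm n).mulVec v) ⟨1, by omega⟩ = v ⟨0, by omega⟩ := J_apply_odd (by omega) (by omega) v
    rw [show i = (⟨1, by omega⟩ : Fin (2*n)) from Fin.ext h] at *
    rw [this, hv ⟨0, by omega⟩ (by simp)]

end JL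
section L3
variable {n : ℕ}

lemma Jm_antisym (k l : Fin (2*n)) : Jm n k l = -Jm n l k := by
  simp only [Jm, Matrix.of_apply]
  by_cases h1 : (k:ℕ) = (l:ℕ) + 1 ∧ Even (l:ℕ)
  · have h2 : ¬((l:ℕ) = (k:ℕ) + 1 ∧ Even (k:ℕ)) := fun hc => by omega
    rw [if_pos h1, if_neg h2, if_pos h1]; ring
  · rw [if_neg h1]
    by_cases h2 : (l:ℕ) = (k:ℕ) + 1 ∧ Even (k:ℕ)
    · rw [if_pos h2, if_pos h2]
    · rw [if_neg h2, if_neg h1, if_neg h2]; ring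

lemma inn_add_left (a b x : G n) : inn (a + b) x = inn a x + inn b x := by
  simp only [inn, Pi.add_apply, add_mul]
  exact Finset.sum_add_distrib

lemma inn_smul_left (c : ℝ) (a x : G n) : inn (c • a) x = c * inn a x := by
  simp [inn, Finset.mul_sum, mul_assoc]

lemma inn_J_swap (u v : G n) : inn ((Jm n).mulVec u) v = - inn u ((Jm n).mulVec v) := by
  rw [inn_mulVec_swap, inn_comm, inn_mulVec_swap]
  rw [Finset.sum_comm]
  rw [← Finset.sum_neg_distrib]
  apply Finset.sum_congr rfl; intro k _
  rw [← Finset.sum_neg_distrib]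
  apply Finset.sum_congr rfl; intro l _
  rw [Jm_antisym]; ring

lemma J_sym_sum (M : Matrix (Fin (2*n)) (Fin (2*n)) ℝ) (hM : ∀ k l, M k l = M l k) :
    ∑ i : Fin (2*n), ∑ k : Fin (2*n), Jm n k i * M k i = 0 := by
  have h : (∑ i : Fin (2*n), ∑ k : Fin (2*n), Jm n k i * M k i)
      = -(∑ i : Fin (2*n), ∑ k : Fin (2*n), Jm n k i * M k i) := by
    nth_rewrite 2 [Finset.sum_comm]
    rw [← Finset.sum_neg_distrib]
    apply Finset.sum_congr rfl; intro i _
    rw [← Finset.sum_neg_distrib]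
    apply Finset.sum_congr rfl; intro k _
    rw [Jm_antisym, hM]; ring
  linarith

lemma Lm_apply (μ : ℝ) (v₀ w₀ : G n) (D : Matrix (Fin (2*n)) (Fin (2*n)) ℝ) (k l : Fin (2*n)) :
    Lm μ v₀ w₀ D k l =
    (if (k : ℕ) = 1 ∧ (l : ℕ) = 1 then μ else 0)
      + (if (l : ℕ) = 1 then v₀ k else 0)
      + (if (k : ℕ) = 1 then w₀ l else 0)
      + D k l := rfl

lemma L_row0 (hn : 2 ≤ n) (μ : ℝ) (v₀ w₀ : G n) (hv : inA v₀)
    (D : Matrix (Fin (2*n)) (Fin (2*n)) ℝ) (hD : DinA D) (x : G n) :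
    (Lm μ v₀ w₀ D).mulVec x ⟨0, by omega⟩ = 0 := by
  rw [mulVec_apply]
  apply Finset.sum_eq_zero; intro l _
  rw [Lm_apply]
  simp only [Fin.val_mk]
  rw [hD _ _ (Or.inl (by simp))]
  by_cases h : (l:ℕ) = 1
  · rw [if_neg (by omega), if_pos h, if_neg (by omega), hv _ (by simp)]; ring
  · rw [if_neg (by omega), if_neg h, if_neg (by omega)]; ring

lemma L_col0 (hn : 2 ≤ n) (μ : ℝ) (v₀ w₀ : G n) (hw : inA w₀)
    (D : Matrix (Fin (2*n)) (Fin (2*n)) ℝ) (hD : DinA D) :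
    (Lm μ v₀ w₀ D).mulVec (E n 0) = 0 := by
  funext i
  rw [mulVecE _ (by omega : 0 < 2*n)]
  rw [Lm_apply]
  simp only [Fin.val_mk]
  rw [hD _ _ (Or.inr (by simp))]
  by_cases h : (i:ℕ) = 1
  · rw [if_neg (by omega), if_neg (by omega), if_pos h, hw _ (by simp)]; simp
  · rw [if_neg (by omega), if_neg (by omega), if_neg h]; simp

lemma L_col1 (hn : 2 ≤ n) (μ : ℝ) (v₀ w₀ : G n) (hw : inA w₀)
    (D : Matrix (Fin (2*n)) (Fin (2*n)) ℝ) (hD : DinA D) :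
    (Lm μ v₀ w₀ D).mulVec (E n 1) = μ • E n 1 + v₀ := by
  funext i
  rw [mulVecE _ (by omega : 1 < 2*n)]
  rw [Lm_apply]
  simp only [Fin.val_mk]
  rw [hD _ _ (Or.inr (by simp))]
  have hw1 : w₀ ⟨1, by omega⟩ = 0 := hw _ (by simp)
  by_cases h : (i:ℕ) = 1
  · simp [E, h, hw1]
  · simp [E, h, hw1]

lemma L_a (hn : 2 ≤ n) (μ : ℝ) (v₀ w₀ : G n)
    (D : Matrix (Fin (2*n)) (Fin (2*n)) ℝ) (x : G n) (hx : inA x) :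
    (Lm μ v₀ w₀ D).mulVec x = inn w₀ x • E n 1 + D.mulVec x := by
  funext k
  rw [Pi.add_apply, Pi.smul_apply, smul_eq_mul, mulVec_apply, mulVec_apply]
  have hx1 : x ⟨1, by omega⟩ = 0 := hx _ (by simp)
  have expand : ∀ l : Fin (2*n), Lm μ v₀ w₀ D k l * x l
      = (if (k:ℕ) = 1 then w₀ l * x l else 0) + D k l * x l := by
    intro l
    rw [Lm_apply]
    by_cases hl : (l:ℕ) = 1
    · have hxl : x l = 0 := by
        rw [show l = (⟨1, by omega⟩ : Fin (2*n)) from Fin.ext hl]; exact hx1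
      rw [hxl]
      by_cases hk : (k:ℕ) = 1
      · rw [if_pos hk, if_pos hk]; ring
      · rw [if_neg hk, if_neg hk]; ring
    · rw [if_neg (fun hc => hl hc.2), if_neg hl]
      by_cases hk : (k:ℕ) = 1
      · rw [if_pos hk, if_pos hk]; ring
      · rw [if_neg hk, if_neg hk]; ring
  rw [Finset.sum_congr rfl (fun l _ => expand l), Finset.sum_add_distrib]
  congr 1
  by_cases hk : (k:ℕ) = 1
  · rw [Finset.sum_congr rfl (fun l _ => if_pos hk)]
    have hE : E n 1 k = 1 := by simp [E, hk]
    rw [hE, inn, mul_one]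
  · rw [Finset.sum_eq_zero (fun l _ => if_neg hk)]
    have hE : E n 1 k = 0 := by simp [E, hk]
    rw [hE, mul_zero]

lemma inn_Lcol1 (hn : 2 ≤ n) (μ : ℝ) (v₀ w₀ : G n) (hw : inA w₀)
    (D : Matrix (Fin (2*n)) (Fin (2*n)) ℝ) (hD : DinA D) (x : G n) :
    inn ((Lm μ v₀ w₀ D).mulVec (E n 1)) x = μ * x ⟨1, by omega⟩ + inn v₀ x := by
  rw [L_col1 hn μ v₀ w₀ hw D hD, inn_add_left, inn_smul_left, innE' (by omega)]

lemma trace_L (hn : 2 ≤ n) (μ : ℝ) (v₀ w₀ : G n) (hv : inA v₀) (hw : inA w₀)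
    (D : Matrix (Fin (2*n)) (Fin (2*n)) ℝ) :
    ∑ i : Fin (2*n), Lm μ v₀ w₀ D i i = μ + Matrix.trace D := by
  have expand : ∀ i : Fin (2*n), Lm μ v₀ w₀ D i i
      = (if i = (⟨1, by omega⟩ : Fin (2*n)) then μ else 0) + D i i := by
    intro i
    rw [Lm_apply]
    by_cases h : (i:ℕ) = 1
    · rw [if_pos ⟨h,h⟩, if_pos h, if_pos h, if_pos (Fin.ext h), hv _ (by omega), hw _ (by omega)]
      ring
    · rw [if_neg (fun hc => h hc.1), if_neg h, if_neg h, if_neg (fun hc => h (congrArg Fin.val hc))]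
      ring
  rw [Finset.sum_congr rfl (fun i _ => expand i), Finset.sum_add_distrib,
    Finset.sum_ite_eq' Finset.univ _ (fun _ => μ), if_pos (Finset.mem_univ _)]
  rfl

end L3
section Delta
variable {n : ℕ}

lemma E_at (i : Fin (2*n)) {k : ℕ} (hk : k < 2*n) :
    E n (i:ℕ) ⟨k, hk⟩ = if i = ⟨k, hk⟩ then (1:ℝ) else 0 := by
  simp only [E]
  by_cases h : i = (⟨k,hk⟩ : Fin (2*n))
  · subst h
    simp
  · rw [if_neg (fun hc => h (Fin.ext hc.symm)), if_neg h]

lemma inn_br (h0 : (0:ℕ) < 2*n) (LM : Matrix (Fin (2*n)) (Fin (2*n)) ℝ) (a b c : G n) :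
    inn (br LM a b) c
      = a ⟨0,h0⟩ * inn (LM.mulVec b) c - b ⟨0,h0⟩ * inn (LM.mulVec a) c := by
  rw [br, show inn a (E n 0) = a ⟨0,h0⟩ from innE h0 a,
    show inn b (E n 0) = b ⟨0,h0⟩ from innE h0 b]
  rw [show (a ⟨0,h0⟩ • LM.mulVec b - b ⟨0,h0⟩ • LM.mulVec a)
      = (a ⟨0,h0⟩ • LM.mulVec b + (-b ⟨0,h0⟩) • LM.mulVec a) by rw [neg_smul]; abel]
  rw [inn_add_left, inn_smul_left, inn_smul_left]; ring

lemma JE0 (h1 : (1:ℕ) < 2*n) : (Jm n).mulVec (E n 0) = E n 1 := by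
  funext k
  rw [mulVecE _ (by omega : (0:ℕ) < 2*n)]
  simp only [Jm, Matrix.of_apply, Fin.val_mk, E]
  by_cases h : (k:ℕ) = 1
  · rw [if_pos ⟨h, by decide⟩, if_pos h]
  · rw [if_neg (fun hc => h hc.1), if_neg (fun hc => absurd hc.1 (by omega)), if_neg h]

lemma JE1 (h1 : (1:ℕ) < 2*n) : (Jm n).mulVec (E n 1) = -(E n 0) := by
  funext k
  rw [mulVecE _ h1]
  simp only [Jm, Matrix.of_apply, Fin.val_mk, E, Pi.neg_apply]
  by_cases h : (k:ℕ) = 0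
  · rw [if_neg (fun hc => absurd hc.1 (by omega)), if_pos ⟨by omega, by rw [h]; decide⟩, if_pos h]
  · rw [if_neg (fun hc => absurd hc.2 (by decide)), if_neg (fun hc => h (by omega)), if_neg h]
    ring

lemma sum_b23 (LM : Matrix (Fin (2*n)) (Fin (2*n)) ℝ) :
    ∑ i : Fin (2*n), (inn (LM.mulVec (E n (i:ℕ))) ((Jm n).mulVec (E n (i:ℕ)))
      + inn (LM.mulVec ((Jm n).mulVec (E n (i:ℕ)))) (E n (i:ℕ))) = 0 := by
  have step : ∀ i : Fin (2*n), inn (LM.mulVec (E n (i:ℕ))) ((Jm n).mulVec (E n (i:ℕ)))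
      + inn (LM.mulVec ((Jm n).mulVec (E n (i:ℕ)))) (E n (i:ℕ))
      = ∑ k : Fin (2*n), Jm n k i * (LM k i + LM i k) := by
    intro i
    have h1 : inn (LM.mulVec (E n (i:ℕ))) ((Jm n).mulVec (E n (i:ℕ)))
        = ∑ k : Fin (2*n), Jm n k i * LM k i := by
      rw [inn]
      apply Finset.sum_congr rfl; intro k _
      rw [mulVecE _ i.isLt, mulVecE _ i.isLt, Fin.eta]
      ring
    have h2 : inn (LM.mulVec ((Jm n).mulVec (E n (i:ℕ)))) (E n (i:ℕ))
        = ∑ k : Fin (2*n), Jm n k i * LM i k := by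
      rw [innE i.isLt, mulVec_apply]
      apply Finset.sum_congr rfl; intro k _
      rw [Fin.eta, mulVecE _ i.isLt, Fin.eta]
      ring
    rw [h1, h2, ← Finset.sum_add_distrib]
    apply Finset.sum_congr rfl; intro k _; ring
  rw [Finset.sum_congr rfl (fun i _ => step i)]
  exact J_sym_sum (Matrix.of fun k l => LM k l + LM l k) (fun k l => by simp [add_comm])

lemma deltaOm_formula (hn : 2 ≤ n) (μ : ℝ) (v₀ w₀ : G n) (hv : inA v₀) (hw : inA w₀)
    (D : Matrix (Fin (2*n)) (Fin (2*n)) ℝ) (hD : DinA D)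
    (nabla : G n → G n → G n) (hK : Koszul (Lm μ v₀ w₀ D) nabla) (x : G n) :
    deltaOm nabla x = Matrix.trace D * x ⟨1, by omega⟩ - inn v₀ x := by
  have h0 : (0:ℕ) < 2*n := by omega
  have h1 : (1:ℕ) < 2*n := by omega
  set L := Lm μ v₀ w₀ D with hLdef
  set i0 : Fin (2*n) := ⟨0, h0⟩ with hi0
  set i1 : Fin (2*n) := ⟨1, h1⟩ with hi1
  have key : ∀ i : Fin (2*n), nablaOm nabla (E n (i:ℕ)) (E n (i:ℕ)) x
      = -(x i1 * L i i)
        - (1/2) * ( (if i = i0 then (1:ℝ) else 0) * inn (L.mulVec x) ((Jm n).mulVec (E n (i:ℕ)))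
          - x i0 * (inn (L.mulVec (E n (i:ℕ))) ((Jm n).mulVec (E n (i:ℕ)))
            + inn (L.mulVec ((Jm n).mulVec (E n (i:ℕ)))) (E n (i:ℕ)))
          - (if i = i1 then (1:ℝ) else 0) * inn (L.mulVec x) (E n (i:ℕ))
          - (if i = i1 then (1:ℝ) else 0) * inn (L.mulVec (E n (i:ℕ))) x
          - (if i = i0 then (1:ℝ) else 0) * inn (L.mulVec ((Jm n).mulVec (E n (i:ℕ)))) x ) := by
    intro i
    have hK1 := hK (E n (i:ℕ)) (E n (i:ℕ)) ((Jm n).mulVec x)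
    have hK2 := hK (E n (i:ℕ)) x ((Jm n).mulVec (E n (i:ℕ)))
    rw [inn_br h0, inn_br h0, inn_br h0] at hK1
    rw [inn_br h0, inn_br h0, inn_br h0] at hK2
    have hJx0 : ((Jm n).mulVec x) ⟨0,h0⟩ = -x ⟨1,h1⟩ := J_apply_even h1 rfl x
    have hJs0 : ((Jm n).mulVec (E n (i:ℕ))) ⟨0,h0⟩ = -(E n (i:ℕ)) ⟨1,h1⟩ :=
      J_apply_even h1 rfl (E n (i:ℕ))
    have hE0 : E n (i:ℕ) ⟨0,h0⟩ = if i = i0 then (1:ℝ) else 0 := E_at i h0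
    have hE1 : E n (i:ℕ) ⟨1,h1⟩ = if i = i1 then (1:ℝ) else 0 := E_at i h1
    rw [hJx0, hE0] at hK1
    rw [hJs0, hE0, hE1] at hK2
    have hLii : inn (L.mulVec (E n (i:ℕ))) (E n (i:ℕ)) = L i i := by
      rw [innE i.isLt, mulVecE _ i.isLt, Fin.eta]
    have hzero : (if i = i0 then (1:ℝ) else 0) * inn (L.mulVec ((Jm n).mulVec x)) (E n (i:ℕ)) = 0 := by
      by_cases h : i = i0
      · rw [if_pos h, h]
        rw [show inn (L.mulVec ((Jm n).mulVec x)) (E n ((i0:Fin (2*n)):ℕ)) 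
              = (L.mulVec ((Jm n).mulVec x)) ⟨0, h0⟩ from innE h0 _]
        rw [L_row0 hn μ v₀ w₀ hv D hD]
        ring
      · rw [if_neg h]; ring
    rw [nablaOm, om, om, inn_J_swap (nabla (E n (i:ℕ)) (E n (i:ℕ))) x,
      inn_comm ((Jm n).mulVec (E n (i:ℕ)))]
    linear_combination (1/2) * hK1 - (1/2) * hK2 - hzero - x i1 * hLii
  rw [deltaOm, Finset.sum_congr rfl (fun i _ => key i)]
  have split : ∀ i : Fin (2*n),
      (-(x i1 * L i i)
        - (1/2) * ( (if i = i0 then (1:ℝ) else 0) * inn (L.mulVec x) ((Jm n).mulVec (E n (i:ℕ)))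
          - x i0 * (inn (L.mulVec (E n (i:ℕ))) ((Jm n).mulVec (E n (i:ℕ)))
            + inn (L.mulVec ((Jm n).mulVec (E n (i:ℕ)))) (E n (i:ℕ)))
          - (if i = i1 then (1:ℝ) else 0) * inn (L.mulVec x) (E n (i:ℕ))
          - (if i = i1 then (1:ℝ) else 0) * inn (L.mulVec (E n (i:ℕ))) x
          - (if i = i0 then (1:ℝ) else 0) * inn (L.mulVec ((Jm n).mulVec (E n (i:ℕ)))) x ))
      = -(x i1 * L i i)
        - (1/2) * (if i = i0 then inn (L.mulVec x) ((Jm n).mulVec (E n (i:ℕ))) else 0)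
        + (1/2) * x i0 * (inn (L.mulVec (E n (i:ℕ))) ((Jm n).mulVec (E n (i:ℕ)))
            + inn (L.mulVec ((Jm n).mulVec (E n (i:ℕ)))) (E n (i:ℕ)))
        + (1/2) * (if i = i1 then inn (L.mulVec x) (E n (i:ℕ)) else 0)
        + (1/2) * (if i = i1 then inn (L.mulVec (E n (i:ℕ))) x else 0)
        + (1/2) * (if i = i0 then inn (L.mulVec ((Jm n).mulVec (E n (i:ℕ)))) x else 0) := by
    intro i
    have hne : i0 ≠ i1 := Fin.ne_of_val_ne (by norm_num : (0:ℕ) ≠ 1)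
    by_cases hA : i = i0 <;> by_cases hB : i = i1
    · exact absurd (hA.symm.trans hB) hne
    all_goals split_ifs <;> first | ring | simp_all
  rw [Finset.sum_congr rfl (fun i _ => split i)]
  rw [Finset.sum_add_distrib, Finset.sum_add_distrib, Finset.sum_add_distrib,
    Finset.sum_add_distrib, Finset.sum_sub_distrib]
  simp only [← Finset.mul_sum]
  rw [Finset.sum_ite_eq' Finset.univ i0, Finset.sum_ite_eq' Finset.univ i1,
    Finset.sum_ite_eq' Finset.univ i1, Finset.sum_ite_eq' Finset.univ i0]
  simp only [Finset.mem_univ, if_true]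
  have hsum1 : ∑ i : Fin (2*n), -(x i1 * L i i) = -(x i1 * (μ + Matrix.trace D)) := by
    rw [Finset.sum_neg_distrib, ← Finset.mul_sum, hLdef, trace_L hn μ v₀ w₀ hv hw D]
  have hsumB : ∑ i : Fin (2*n), (inn (L.mulVec (E n (i:ℕ))) ((Jm n).mulVec (E n (i:ℕ)))
      + inn (L.mulVec ((Jm n).mulVec (E n (i:ℕ)))) (E n (i:ℕ))) = 0 := sum_b23 L
  have hf1 : inn (L.mulVec x) ((Jm n).mulVec (E n ((i0:Fin (2*n)):ℕ)))
      = L.mulVec x i1 := by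
    rw [show E n ((i0:Fin (2*n)):ℕ) = E n 0 from rfl, JE0 h1]
    exact innE h1 _
  have hf2 : inn (L.mulVec x) (E n ((i1:Fin (2*n)):ℕ)) = L.mulVec x i1 := by
    rw [show E n ((i1:Fin (2*n)):ℕ) = E n 1 from rfl]
    exact innE h1 _
  have hf3 : inn (L.mulVec (E n ((i1:Fin (2*n)):ℕ))) x = μ * x i1 + inn v₀ x := by
    rw [show E n ((i1:Fin (2*n)):ℕ) = E n 1 from rfl, hLdef]
    exact inn_Lcol1 hn μ v₀ w₀ hw D hD x
  have hf4 : inn (L.mulVec ((Jm n).mulVec (E n ((i0:Fin (2*n)):ℕ)))) x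
      = μ * x i1 + inn v₀ x := by
    rw [show E n ((i0:Fin (2*n)):ℕ) = E n 0 from rfl, JE0 h1, hLdef]
    exact inn_Lcol1 hn μ v₀ w₀ hw D hD x
  rw [hsum1, hf1, hf2, hf3, hf4, hsumB]
  ring

end Delta
section Nijpart
variable {n : ℕ}

lemma inn_zero_left (x : G n) : inn 0 x = 0 := by simp [inn]

lemma Nij_eq (h0 : (0:ℕ) < 2*n) (LM : Matrix (Fin (2*n)) (Fin (2*n)) ℝ) (x y : G n) :
    Nij LM x y
      = x ⟨0,h0⟩ • (LM + Jm n * LM * Jm n).mulVec y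
        - y ⟨0,h0⟩ • (LM + Jm n * LM * Jm n).mulVec x
        + ((Jm n).mulVec y ⟨0,h0⟩) • (LM + Jm n * LM * Jm n).mulVec ((Jm n).mulVec x)
        - ((Jm n).mulVec x ⟨0,h0⟩) • (LM + Jm n * LM * Jm n).mulVec ((Jm n).mulVec y) := by
  simp only [Nij, br, innE h0, Matrix.add_mulVec, ← Matrix.mulVec_mulVec,
    Matrix.mulVec_sub, Matrix.mulVec_add, Matrix.mulVec_smul, JJ,
    Matrix.mulVec_neg, smul_neg]
  funext k
  simp only [Pi.add_apply, Pi.sub_apply, Pi.smul_apply, Pi.neg_apply, smul_eq_mul]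
  ring

lemma P_a (hn : 2 ≤ n) (μ : ℝ) (v₀ w₀ : G n) (hv : inA v₀) (hw : inA w₀)
    (D : Matrix (Fin (2*n)) (Fin (2*n)) ℝ) (hD : DinA D) (x : G n) (hx : inA x) :
    (Lm μ v₀ w₀ D + Jm n * Lm μ v₀ w₀ D * Jm n).mulVec x
      = inn w₀ x • E n 1 - inn w₀ ((Jm n).mulVec x) • E n 0
        + D.mulVec x + (Jm n).mulVec (D.mulVec ((Jm n).mulVec x)) := by
  have h1 : (1:ℕ) < 2*n := by omega
  rw [Matrix.add_mulVec, ← Matrix.mulVec_mulVec, ← Matrix.mulVec_mulVec]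
  rw [L_a hn μ v₀ w₀ D x hx, L_a hn μ v₀ w₀ D ((Jm n).mulVec x) (J_inA hx)]
  rw [Matrix.mulVec_add, Matrix.mulVec_smul, JE1 h1]
  funext k
  simp only [Pi.add_apply, Pi.sub_apply, Pi.smul_apply, Pi.neg_apply, smul_eq_mul,
    mul_neg]
  ring

lemma Pz_backward (hn : 2 ≤ n) (μ : ℝ) (v₀ w₀ : G n) (hv : inA v₀) (hw : inA w₀)
    (D : Matrix (Fin (2*n)) (Fin (2*n)) ℝ) (hD : DinA D)
    (hv0 : v₀ = 0) (hw0 : w₀ = 0)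
    (hcomm : ∀ x : G n, inA x → D.mulVec ((Jm n).mulVec x) = (Jm n).mulVec (D.mulVec x))
    (z : G n) :
    (Lm μ v₀ w₀ D + Jm n * Lm μ v₀ w₀ D * Jm n).mulVec z
      = (μ * z ⟨1, by omega⟩) • E n 1 - (μ * z ⟨0, by omega⟩) • E n 0 := by
  have h0 : (0:ℕ) < 2*n := by omega
  have h1 : (1:ℕ) < 2*n := by omega
  set P := Lm μ v₀ w₀ D + Jm n * Lm μ v₀ w₀ D * Jm n with hP
  set za : G n := z - z ⟨0,h0⟩ • E n 0 - z ⟨1,h1⟩ • E n 1 with hza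
  have hzaA : inA za := by
    intro i hi
    have hiv : (i:ℕ) = 0 ∨ (i:ℕ) = 1 := by omega
    rcases hiv with h | h
    · have : i = (⟨0,h0⟩ : Fin (2*n)) := Fin.ext h
      rw [hza, this]
      simp [E]
    · have : i = (⟨1,h1⟩ : Fin (2*n)) := Fin.ext h
      rw [hza, this]
      simp [E]
  have hdecomp : z = z ⟨0,h0⟩ • E n 0 + z ⟨1,h1⟩ • E n 1 + za := by
    funext i
    rw [hza]
    simp only [Pi.add_apply, Pi.sub_apply, Pi.smul_apply, smul_eq_mul]
    ring
  have hPza : P.mulVec za = 0 := by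
    rw [hP, P_a hn μ v₀ w₀ hv hw D hD za hzaA, hw0, inn_zero_left, inn_zero_left,
      hcomm za hzaA, JJ]
    funext k
    simp
  have hPE0 : P.mulVec (E n 0) = -(μ • E n 0) := by
    rw [hP, Matrix.add_mulVec, ← Matrix.mulVec_mulVec, ← Matrix.mulVec_mulVec,
      L_col0 hn μ v₀ w₀ hw D hD, JE0 h1, L_col1 hn μ v₀ w₀ hw D hD, hv0,
      Matrix.mulVec_add, Matrix.mulVec_smul, JE1 h1]
    funext k
    simp
  have hPE1 : P.mulVec (E n 1) = μ • E n 1 := by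
    rw [hP, Matrix.add_mulVec, ← Matrix.mulVec_mulVec, ← Matrix.mulVec_mulVec,
      JE1 h1, Matrix.mulVec_neg, L_col0 hn μ v₀ w₀ hw D hD,
      L_col1 hn μ v₀ w₀ hw D hD, hv0]
    funext k
    simp
  calc P.mulVec z = P.mulVec (z ⟨0,h0⟩ • E n 0 + z ⟨1,h1⟩ • E n 1 + za) := by rw [← hdecomp]
    _ = z ⟨0,h0⟩ • P.mulVec (E n 0) + z ⟨1,h1⟩ • P.mulVec (E n 1) + P.mulVec za := by
        rw [Matrix.mulVec_add, Matrix.mulVec_add, Matrix.mulVec_smul, Matrix.mulVec_smul]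
    _ = (μ * z ⟨1,h1⟩) • E n 1 - (μ * z ⟨0,h0⟩) • E n 0 := by
        rw [hPE0, hPE1, hPza]
        funext k
        simp only [Pi.add_apply, Pi.sub_apply, Pi.smul_apply, Pi.neg_apply, Pi.zero_apply,
          smul_eq_mul, mul_neg]
        ring

end Nijpart
/-- `δω = 0` and `N = 0` (balanced, class `W₃`) iff `Tr D = 0`,
`v₀ = 0`, `w₀ = 0` and `D J' = J' D` (i.e. `D ∈ gl(n-1,ℂ)`). -/
theorem statement9 (n : ℕ) (hn : 2 ≤ n) (μ : ℝ) (v₀ w₀ : G n) (hv : inA v₀) (hw : inA w₀)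
    (D : Matrix (Fin (2*n)) (Fin (2*n)) ℝ) (hD : DinA D)
    (nabla : G n → G n → G n) (hK : Koszul (Lm μ v₀ w₀ D) nabla) :
    ((∀ x : G n, deltaOm nabla x = 0) ∧ (∀ x y : G n, Nij (Lm μ v₀ w₀ D) x y = 0))
      ↔ (Matrix.trace D = 0 ∧ v₀ = 0 ∧ w₀ = 0
          ∧ (∀ x : G n, inA x → (D).mulVec ((Jm n).mulVec x) = (Jm n).mulVec ((D).mulVec x))) := by
  have h0 : (0:ℕ) < 2*n := by omega
  have h1 : (1:ℕ) < 2*n := by omega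
  constructor
  · rintro ⟨hδ, hN⟩
    have hδ' : ∀ x : G n, Matrix.trace D * x ⟨1,h1⟩ - inn v₀ x = 0 := fun x => by
      rw [← deltaOm_formula hn μ v₀ w₀ hv hw D hD nabla hK x]; exact hδ x
    have htr : Matrix.trace D = 0 := by
      have h2 := hδ' (E n 1)
      rw [innE h1] at h2
      have hE11 : E n 1 ⟨1,h1⟩ = 1 := by simp [E]
      rw [hE11, hv _ (by simp)] at h2
      linarith
    have hv0 : v₀ = 0 := by
      have h2 := hδ' v₀
      rw [htr, hv _ (by simp)] at h2
      apply inn_self_eq_zero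
      linarith
    have hPa : ∀ x : G n, inA x →
        (Lm μ v₀ w₀ D + Jm n * Lm μ v₀ w₀ D * Jm n).mulVec x = 0 := by
      intro x hx
      have hNx := hN (E n 0) x
      rw [Nij_eq h0] at hNx
      have c1 : E n 0 ⟨0,h0⟩ = 1 := by simp [E]
      have c2 : x ⟨0,h0⟩ = 0 := hx _ (by simp)
      have c3 : ((Jm n).mulVec x) ⟨0,h0⟩ = 0 := J_inA hx _ (by simp)
      have c4 : ((Jm n).mulVec (E n 0)) ⟨0,h0⟩ = 0 := by
        rw [JE0 h1]; simp [E]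
      rw [c1, c2, c3, c4, one_smul, zero_smul, zero_smul, zero_smul] at hNx
      have := hNx
      funext k
      have hk := congrFun hNx k
      simp only [Pi.add_apply, Pi.sub_apply, Pi.zero_apply] at hk ⊢
      linarith
    have hw0 : w₀ = 0 := by
      have h2 := hPa w₀ hw
      rw [P_a hn μ v₀ w₀ hv hw D hD w₀ hw] at h2
      have hk := congrFun h2 ⟨1,h1⟩
      have e1 : E n 1 ⟨1,h1⟩ = (1:ℝ) := by simp [E]
      have e2 : E n 0 ⟨1,h1⟩ = (0:ℝ) := by simp [E]
      have e3 : (D.mulVec w₀) ⟨1,h1⟩ = 0 := by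
        rw [mulVec_apply]
        exact Finset.sum_eq_zero (fun l _ => by rw [hD _ _ (Or.inl (by simp))]; ring)
      have e4 : ((Jm n).mulVec (D.mulVec ((Jm n).mulVec w₀))) ⟨1,h1⟩
          = (D.mulVec ((Jm n).mulVec w₀)) ⟨0,h0⟩ := by
        have := J_apply_odd h1 (by norm_num) (D.mulVec ((Jm n).mulVec w₀))
        exact this
      have e5 : (D.mulVec ((Jm n).mulVec w₀)) ⟨0,h0⟩ = 0 := by
        rw [mulVec_apply]
        exact Finset.sum_eq_zero (fun l _ => by rw [hD _ _ (Or.inl (by simp))]; ring)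
      simp only [Pi.add_apply, Pi.sub_apply, Pi.smul_apply, Pi.zero_apply, smul_eq_mul,
        e1, e2, e3] at hk
      rw [e4, e5] at hk
      apply inn_self_eq_zero
      linarith
    have hcomm : ∀ x : G n, inA x →
        D.mulVec ((Jm n).mulVec x) = (Jm n).mulVec (D.mulVec x) := by
      intro x hx
      have h2 := hPa ((Jm n).mulVec x) (J_inA hx)
      rw [P_a hn μ v₀ w₀ hv hw D hD _ (J_inA hx), hw0, inn_zero_left, inn_zero_left, JJ,
        Matrix.mulVec_neg, Matrix.mulVec_neg] at h2
      funext k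
      have hk := congrFun h2 k
      simp only [Pi.add_apply, Pi.sub_apply, Pi.smul_apply, Pi.neg_apply, Pi.zero_apply,
        smul_eq_mul, mul_zero, zero_mul] at hk
      have : D.mulVec ((Jm n).mulVec x) k - (Jm n).mulVec (D.mulVec x) k = 0 := by
        linarith
      linarith
    exact ⟨htr, hv0, hw0, hcomm⟩
  · rintro ⟨htr, hv0, hw0, hcomm⟩
    constructor
    · intro x
      rw [deltaOm_formula hn μ v₀ w₀ hv hw D hD nabla hK x, htr, hv0, inn_zero_left]
      ring
    · intro x y
      rw [Nij_eq h0]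
      have hP := Pz_backward hn μ v₀ w₀ hv hw D hD hv0 hw0 hcomm
      rw [hP y, hP x, hP ((Jm n).mulVec x), hP ((Jm n).mulVec y)]
      have jx0 : ((Jm n).mulVec x) ⟨0,h0⟩ = -x ⟨1,h1⟩ := J_apply_even h1 rfl x
      have jy0 : ((Jm n).mulVec y) ⟨0,h0⟩ = -y ⟨1,h1⟩ := J_apply_even h1 rfl y
      have jx1 : ((Jm n).mulVec x) ⟨1,h1⟩ = x ⟨0,h0⟩ := J_apply_odd h1 (by norm_num) x
      have jy1 : ((Jm n).mulVec y) ⟨1,h1⟩ = y ⟨0,h0⟩ := J_apply_odd h1 (by norm_num) y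
      rw [jx0, jy0, jx1, jy1]
      funext k
      simp only [Pi.add_apply, Pi.sub_apply, Pi.smul_apply, Pi.zero_apply, smul_eq_mul,
        mul_neg, neg_mul]
      ring
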